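/- Let m be a positive integer. For variables x = (x₁,…,x_k) and z = (z₁,…,z_p) with all entries pairwise distinct, define K(x;z) = A(x,z)^m / (A(x)^m A(z)^m) · exp(μ(x̄ − z̄)), where A(x,z) = ∏_{i,j}(x_i − z_j), A(x) = ∏_{i<j}(x_i − x_j), and x̄ = ∑ x_i. Then L_m^{(k)}(x) K = L_m^{(p)}(z) K + μ²(p − k) K, where L_m^{(n)} = −∑_{i=1}^n ∂²/∂x_i² + ∑_{i<j} 2m(m+1)/(x_i − x_j)² is the rational Calogero–Moser operator. -/

import Mathlib

/-!
Away from the hyperplanes `x_i = x_j`, `z_i = z_j`, `x_i = z_j` the kernel does not vanish, and its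
logarithmic derivative in `x_i` is `L_i = μ + m ∑_j 1/(x_i - z_j) - m ∑_{j ≠ i} 1/(x_i - x_j)`,
so `∂²K/∂x_i² = (∂L_i/∂x_i + L_i²) K`. Up to a sign, `K(x; z)` is the kernel `K(z; x)` with `μ`
replaced by `-μ`, which gives the `z`-derivatives in the same form. What remains is an identity
between rational functions. It follows from the partial-fraction identity
`1/((a-b)(a-c)) + 1/((b-c)(b-a)) + 1/((c-a)(c-b)) = 0`: summed over triples of the `x_i` it gives
`∑_i (∑_{j ≠ i} 1/(x_i - x_j))² = ∑_{i ≠ j} 1/(x_i - x_j)²`, and applied to `(x_i, x_j, z_l)` it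
turns the mixed terms into an expression symmetric under `x ↔ z`.
-/

open Function Filter Topology

section PartialFractions

variable {ι κ : Type*} [Fintype ι] [Fintype κ]

-- Stated with `0⁻¹ = 0` in mind, so that it holds for all `a b c`.
theorem inv_sub_mul_inv_sub_cyclic (a b c : ℂ) :
    (a - b)⁻¹ * (a - c)⁻¹ + (b - c)⁻¹ * (b - a)⁻¹ + (c - a)⁻¹ * (c - b)⁻¹
      = (if b = c then ((a - b) ^ 2)⁻¹ else 0) + (if c = a then ((b - c) ^ 2)⁻¹ else 0)
        + (if a = b then ((c - a) ^ 2)⁻¹ else 0) := by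
  by_cases hab : a = b
  · subst hab
    by_cases hac : a = c
    · subst hac; simp
    · simp [hac, Ne.symm hac, sq]
  by_cases hbc : b = c
  · subst hbc; simp [hab, sq]
  by_cases hca : c = a
  · subst hca; simp [hab, hbc, sq]
  simp only [hab, hbc, hca, if_false, add_zero]
  have := sub_ne_zero.2 hab
  have := sub_ne_zero.2 hbc
  have := sub_ne_zero.2 hca
  field_simp
  ring

theorem sum_sum_inv_sub_eq_zero (y : ι → ℂ) : ∑ i, ∑ j, (y i - y j)⁻¹ = 0 := by
  have h : ∑ i, ∑ j, (y i - y j)⁻¹ = -∑ i, ∑ j, (y i - y j)⁻¹ := calc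
    _ = ∑ i, ∑ j, (y j - y i)⁻¹ := Finset.sum_comm
    _ = _ := by simp only [← Finset.sum_neg_distrib, ← inv_neg, neg_sub]
  linear_combination h / 2

theorem sum_sum_sum_rotate {α β γ M : Type*} [Fintype α] [Fintype β] [Fintype γ]
    [AddCommMonoid M] (f : α → β → γ → M) :
    ∑ c, ∑ a, ∑ b, f a b c = ∑ a, ∑ b, ∑ c, f a b c := by
  rw [Finset.sum_comm]
  exact Finset.sum_congr rfl fun _ _ => Finset.sum_comm

theorem sum_sq_sum_inv_sub {y : ι → ℂ} (hy : Injective y) :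
    ∑ i, (∑ j, (y i - y j)⁻¹) ^ 2 = ∑ i, ∑ j, ((y i - y j) ^ 2)⁻¹ := by
  classical
  set g : ι → ι → ι → ℂ := fun i j l => (y i - y j)⁻¹ * (y i - y l)⁻¹
  have hexpand : ∑ i, (∑ j, (y i - y j)⁻¹) ^ 2 = ∑ i, ∑ j, ∑ l, g i j l := by
    simp only [sq, Finset.sum_mul_sum, g]
  have hcyclic : 3 * ∑ i, ∑ j, ∑ l, g i j l = 3 * ∑ i, ∑ j, ((y i - y j) ^ 2)⁻¹ := calc
    _ = ∑ i, ∑ j, ∑ l, (g i j l + g j l i + g l i j) := by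
        simp only [Finset.sum_add_distrib, sum_sum_sum_rotate (fun i j l => g l i j),
          sum_sum_sum_rotate g]
        ring
    _ = ∑ i, ∑ j, ∑ l, ((if j = l then ((y i - y j) ^ 2)⁻¹ else 0)
          + (if l = i then ((y j - y l) ^ 2)⁻¹ else 0)
          + (if i = j then ((y l - y i) ^ 2)⁻¹ else 0)) := by
        simp only [g, inv_sub_mul_inv_sub_cyclic, hy.eq_iff]
    _ = _ := by
        simp only [Finset.sum_add_distrib, Finset.sum_ite_irrel, Finset.sum_const_zero,
          Finset.sum_ite_eq, Finset.sum_ite_eq', Finset.mem_univ, if_true]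
        rw [Finset.sum_comm (f := fun i j => ((y j - y i) ^ 2)⁻¹)]
        ring
  rw [hexpand]
  linear_combination hcyclic / 3

theorem two_mul_sum_mul_sum_inv_sub {x : ι → ℂ} (hx : Injective x) {z : κ → ℂ}
    (hxz : ∀ i j, x i ≠ z j) :
    2 * ∑ i, (∑ j, (x i - z j)⁻¹) * ∑ i', (x i - x i')⁻¹
      = ∑ j, ∑ i, ((x i - z j) ^ 2)⁻¹ - ∑ j, (∑ i, (x i - z j)⁻¹) ^ 2 := by
  classical
  have hpair i i' j : (x i - x i')⁻¹ * (x i - z j)⁻¹ + (x i' - z j)⁻¹ * (x i' - x i)⁻¹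
      = (if i = i' then ((x i - z j) ^ 2)⁻¹ else 0) - (x i - z j)⁻¹ * (x i' - z j)⁻¹ := by
    have h := inv_sub_mul_inv_sub_cyclic (x i) (x i') (z j)
    simp only [if_neg (hxz i' j), if_neg (hxz i j).symm, hx.eq_iff] at h
    have hinv (a b : ℂ) : (b - a)⁻¹ = -(a - b)⁻¹ := by rw [← neg_sub, inv_neg]
    rw [hinv (x i) (z j), hinv (x i') (z j), sub_sq_comm (z j)] at h
    linear_combination h
  calc 2 * ∑ i, (∑ j, (x i - z j)⁻¹) * ∑ i', (x i - x i')⁻¹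
      = ∑ i, ∑ i', ∑ j, ((x i - x i')⁻¹ * (x i - z j)⁻¹
          + (x i' - z j)⁻¹ * (x i' - x i)⁻¹) := by
        simp only [Finset.sum_add_distrib, Finset.sum_mul_sum]
        rw [Finset.sum_comm (f := fun i i' => ∑ j, (x i' - z j)⁻¹ * (x i' - x i)⁻¹)]
        simp only [mul_comm (x _ - z _)⁻¹]
        rw [Finset.sum_congr rfl fun i _ => Finset.sum_comm]
        ring
    _ = _ := by
        simp only [hpair, Finset.sum_sub_distrib, Finset.sum_ite_irrel, Finset.sum_const_zero,
          Finset.sum_ite_eq, Finset.mem_univ, if_true]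
        congr 1
        · exact Finset.sum_comm
        · simp only [sq, Finset.sum_mul_sum]
          exact (sum_sum_sum_rotate _).symm

theorem two_mul_sum_sum_Ioi_div_sub_sq {α : Type*} [Fintype α] [LinearOrder α]
    [LocallyFiniteOrderTop α] [LocallyFiniteOrderBot α] (c : ℂ) (y : α → ℂ) :
    2 * ∑ i, ∑ j ∈ Finset.Ioi i, c / (y i - y j) ^ 2 = c * ∑ i, ∑ j, ((y i - y j) ^ 2)⁻¹ := by
  have h i j : 2 * (c / (y i - y j) ^ 2) = c * ((y j - y i) ^ 2)⁻¹ + c * ((y i - y j) ^ 2)⁻¹ := by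
    rw [sub_sq_comm (y j)]
    ring
  simp only [Finset.mul_sum, h, Finset.sum_sum_Ioi_add_eq_sum_sum_off_diag]
  rw [Finset.sum_comm]
  refine Finset.sum_congr rfl fun i _ => ?_
  rw [← Finset.sum_compl_add_sum {i}]
  simp

end PartialFractions

section KernelAlgebra

variable {ι κ : Type*} [Fintype ι] [Fintype κ]

/-- `(∂²K/∂x_i²) / K` for the kernel `K(x; z)`, written as `∂L/∂x_i + L²` with the logarithmic
derivative `L = μ + m ∑_j (x_i - z_j)⁻¹ - m ∑_j (x_i - x_j)⁻¹`; the terms `j = i` vanish because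
`0⁻¹ = 0`. -/
noncomputable def kernelSecondDerivRatio (m : ℕ) (μ : ℂ) (x : ι → ℂ) (z : κ → ℂ) (i : ι) : ℂ :=
  m * ∑ j, ((x i - x j) ^ 2)⁻¹ - m * ∑ j, ((x i - z j) ^ 2)⁻¹
    + (μ + m * ∑ j, (x i - z j)⁻¹ - m * ∑ j, (x i - x j)⁻¹) ^ 2

theorem sum_kernelSecondDerivRatio {x : ι → ℂ} (hx : Injective x) {z : κ → ℂ}
    (hxz : ∀ i j, x i ≠ z j) (m : ℕ) (μ : ℂ) :
    ∑ i, kernelSecondDerivRatio m μ x z i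
      = Fintype.card ι * μ ^ 2 + m * (m + 1) * ∑ i, ∑ j, ((x i - x j) ^ 2)⁻¹
        + 2 * m * μ * ∑ i, ∑ j, (x i - z j)⁻¹ - m * ∑ i, ∑ j, ((x i - z j) ^ 2)⁻¹
        + m ^ 2 * (∑ i, (∑ j, (x i - z j)⁻¹) ^ 2 + ∑ j, (∑ i, (x i - z j)⁻¹) ^ 2
          - ∑ i, ∑ j, ((x i - z j) ^ 2)⁻¹) := by
  have hmixed := two_mul_sum_mul_sum_inv_sub hx hxz
  rw [Finset.sum_comm (f := fun j i => ((x i - z j) ^ 2)⁻¹)] at hmixed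
  have hexpand i : kernelSecondDerivRatio m μ x z i
      = μ ^ 2 + m * ∑ j, ((x i - x j) ^ 2)⁻¹ - m * ∑ j, ((x i - z j) ^ 2)⁻¹
        + 2 * m * μ * ∑ j, (x i - z j)⁻¹ - 2 * m * μ * ∑ j, (x i - x j)⁻¹
        + m ^ 2 * (∑ j, (x i - z j)⁻¹) ^ 2 + m ^ 2 * (∑ j, (x i - x j)⁻¹) ^ 2
        - m ^ 2 * (2 * ((∑ j, (x i - z j)⁻¹) * ∑ j, (x i - x j)⁻¹)) := by
    unfold kernelSecondDerivRatio
    ring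
  simp only [hexpand, Finset.sum_add_distrib, Finset.sum_sub_distrib, ← Finset.mul_sum,
    Finset.sum_const, Finset.card_univ, nsmul_eq_mul]
  linear_combination m ^ 2 * sum_sq_sum_inv_sub hx - 2 * m * μ * sum_sum_inv_sub_eq_zero x
    - m ^ 2 * hmixed

theorem sum_kernelSecondDerivRatio_sub_eq_swap {x : ι → ℂ} (hx : Injective x)
    {z : κ → ℂ} (hz : Injective z) (hxz : ∀ i j, x i ≠ z j) (m : ℕ) (μ : ℂ) :
    ∑ i, kernelSecondDerivRatio m μ x z i
      - m * (m + 1) * ∑ i, ∑ j, ((x i - x j) ^ 2)⁻¹ - Fintype.card ι * μ ^ 2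
    = ∑ j, kernelSecondDerivRatio m (-μ) z x j
      - m * (m + 1) * ∑ j, ∑ l, ((z j - z l) ^ 2)⁻¹ - Fintype.card κ * μ ^ 2 := by
  have hinv i j : (z j - x i)⁻¹ = -(x i - z j)⁻¹ := by rw [← neg_sub, inv_neg]
  have hsq i j : ((z j - x i) ^ 2)⁻¹ = ((x i - z j) ^ 2)⁻¹ := by rw [sub_sq_comm]
  rw [sum_kernelSecondDerivRatio hx hxz, sum_kernelSecondDerivRatio hz fun j i => (hxz i j).symm]
  simp only [hinv, hsq, Finset.sum_neg_distrib, neg_sq]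
  rw [Finset.sum_comm (f := fun j i => (x i - z j)⁻¹),
    Finset.sum_comm (f := fun j i => ((x i - z j) ^ 2)⁻¹)]
  ring

end KernelAlgebra

section UpdateLogDeriv

variable {ι κ : Type*} [DecidableEq ι]

theorem HasDerivAt.logDeriv_eq {f : ℂ → ℂ} {f' s : ℂ} (h : HasDerivAt f f' s) :
    logDeriv f s = f' / f s := by
  rw [logDeriv_apply, h.deriv]

theorem hasDerivAt_update_apply (x : ι → ℂ) (i a : ι) (s : ℂ) :
    HasDerivAt (fun t => update x i t a) ((Pi.single i 1 : ι → ℂ) a) s :=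
  hasDerivAt_pi.1 (hasDerivAt_update x i s) a

@[fun_prop]
theorem differentiable_update_apply (x : ι → ℂ) (i a : ι) :
    Differentiable ℂ (fun t => update x i t a) :=
  fun s => (hasDerivAt_update_apply x i a s).differentiableAt

variable [Fintype ι] [Fintype κ]

theorem logDeriv_prod_update_sub (x : ι → ℂ) (z : κ → ℂ) (i : ι) {s : ℂ}
    (hs : ∀ a j, update x i s a ≠ z j) :
    logDeriv (fun t => ∏ a, ∏ j, (update x i t a - z j)) s = ∑ j, (s - z j)⁻¹ := by
  have hd a j := (hasDerivAt_update_apply x i a s).sub_const (z j)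
  have hne a j := sub_ne_zero.2 (hs a j)
  have hfactor a : logDeriv (fun t => ∏ j, (update x i t a - z j)) s
      = (Pi.single i 1 : ι → ℂ) a * ∑ j, (update x i s a - z j)⁻¹ := by
    rw [logDeriv_prod (fun j _ => hne a j) fun j _ => (hd a j).differentiableAt, Finset.mul_sum]
    exact Finset.sum_congr rfl fun j _ => (hd a j).logDeriv_eq
  rw [logDeriv_prod (fun a _ => Finset.prod_ne_zero_iff.2 fun j _ => hne a j)
    fun a _ => DifferentiableAt.fun_finsetProd fun j _ => (hd a j).differentiableAt]
  simp [hfactor, Pi.single_apply]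

end UpdateLogDeriv

section VandermondeLogDeriv

variable {ι : Type*} [Fintype ι] [LinearOrder ι] [LocallyFiniteOrderTop ι]

theorem prod_prod_Ioi_sub_ne_zero {x : ι → ℂ} (hx : Injective x) :
    ∏ i, ∏ j ∈ Finset.Ioi i, (x i - x j) ≠ 0 :=
  Finset.prod_ne_zero_iff.2 fun _ _ => Finset.prod_ne_zero_iff.2 fun _ hj =>
    sub_ne_zero.2 (hx.ne (Finset.mem_Ioi.1 hj).ne)

variable [LocallyFiniteOrderBot ι]

theorem logDeriv_prod_Ioi_update_sub (x : ι → ℂ) (i : ι) {s : ℂ} (hs : Injective (update x i s)) :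
    logDeriv (fun t => ∏ a, ∏ b ∈ Finset.Ioi a, (update x i t a - update x i t b)) s
      = ∑ b ∈ {i}ᶜ, (s - x b)⁻¹ := by
  set u := update x i s
  have hd a b := (hasDerivAt_update_apply x i a s).fun_sub (hasDerivAt_update_apply x i b s)
  have hne {a b : ι} (hab : a < b) : u a - u b ≠ 0 := sub_ne_zero.2 (hs.ne hab.ne)
  -- symmetrising each factor's logarithmic derivative turns the sum over `a < b` into one over
  -- `a ≠ b`, in which only `a = i` contributes
  have hfactor a : logDeriv (fun t => ∏ b ∈ Finset.Ioi a, (update x i t a - update x i t b)) s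
      = ∑ b ∈ Finset.Ioi a, ((Pi.single i 1 : ι → ℂ) a / (u a - u b)
        + (Pi.single i 1 : ι → ℂ) b / (u b - u a)) := by
    rw [logDeriv_prod (f := fun b t => update x i t a - update x i t b)
      (fun b hb => hne (Finset.mem_Ioi.1 hb)) fun b _ => (hd a b).differentiableAt]
    refine Finset.sum_congr rfl fun b _ => ?_
    rw [(hd a b).logDeriv_eq, ← neg_sub (u a), div_neg, sub_div]
    ring
  rw [logDeriv_prod (f := fun a t => ∏ b ∈ Finset.Ioi a, (update x i t a - update x i t b))
    (fun a _ => Finset.prod_ne_zero_iff.2 fun b hb => hne (Finset.mem_Ioi.1 hb))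
    fun a _ => DifferentiableAt.fun_finsetProd fun b _ => (hd a b).differentiableAt]
  simp only [hfactor, Finset.sum_sum_Ioi_add_eq_sum_sum_off_diag, Pi.single_apply, ite_div,
    zero_div, Finset.sum_ite_irrel, Finset.sum_const_zero, Finset.sum_ite_eq', Finset.mem_univ,
    if_true, u, update_self, one_div]
  refine Finset.sum_congr rfl fun b hb => ?_
  rw [update_of_ne (by simpa using hb)]

end VandermondeLogDeriv

section Eventually

variable {ι κ : Type*} [Finite ι] [DecidableEq ι]

theorem eventually_update_apply_ne [Finite κ] {x : ι → ℂ} {z : κ → ℂ} (hxz : ∀ a j, x a ≠ z j)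
    (i : ι) : ∀ᶠ s in 𝓝 (x i), ∀ a j, update x i s a ≠ z j :=
  eventually_all.2 fun a => eventually_all.2 fun j =>
    (hasDerivAt_update_apply x i a (x i)).continuousAt.eventually_ne (by simpa using hxz a j)

theorem eventually_injective_update {x : ι → ℂ} (hx : Injective x) (i : ι) :
    ∀ᶠ s in 𝓝 (x i), Injective (update x i s) := by
  have hcont a := (hasDerivAt_update_apply x i a (x i)).continuousAt
  have h : ∀ᶠ s in 𝓝 (x i), ∀ a b, a ≠ b → update x i s a ≠ update x i s b :=
    eventually_all.2 fun a => eventually_all.2 fun b => by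
      by_cases hab : a = b
      · exact .of_forall fun _ h => absurd hab h
      · exact ((hcont a).ne_iff_eventually_ne (hcont b)).1 (by simpa using hx.ne hab)
          |>.mono fun _ h _ => h
  exact h.mono fun s hs a b => not_imp_not.1 (hs a b)

end Eventually

theorem deriv_deriv_eq_of_deriv_eventuallyEq {𝕜 : Type*} [NontriviallyNormedField 𝕜]
    {f φ : 𝕜 → 𝕜} {a : 𝕜} (hf : deriv f =ᶠ[𝓝 a] fun s => φ s * f s)
    (hφ : DifferentiableAt 𝕜 φ a) (hfa : DifferentiableAt 𝕜 f a) :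
    deriv (deriv f) a = (deriv φ a + φ a ^ 2) * f a := by
  rw [hf.deriv_eq, deriv_fun_mul hφ hfa, hf.eq_of_nhds]
  ring

section Kernel

variable {k p : ℕ}

noncomputable def rationalKernel (m : ℕ) (μ : ℂ) (x : Fin k → ℂ) (z : Fin p → ℂ) : ℂ :=
  (∏ i, ∏ j, (x i - z j)) ^ m
    / ((∏ i, ∏ j ∈ Finset.Ioi i, (x i - x j)) ^ m * (∏ i, ∏ j ∈ Finset.Ioi i, (z i - z j)) ^ m)
    * Complex.exp (μ * (∑ i, x i - ∑ i, z i))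

theorem rationalKernel_ne_zero (m : ℕ) (μ : ℂ) {x : Fin k → ℂ} (hx : Injective x)
    {z : Fin p → ℂ} (hz : Injective z) (hxz : ∀ i j, x i ≠ z j) :
    rationalKernel m μ x z ≠ 0 := by
  have hcross : ∏ i, ∏ j, (x i - z j) ≠ 0 := Finset.prod_ne_zero_iff.2 fun i _ =>
    Finset.prod_ne_zero_iff.2 fun j _ => sub_ne_zero.2 (hxz i j)
  have := prod_prod_Ioi_sub_ne_zero hx
  have := prod_prod_Ioi_sub_ne_zero hz
  unfold rationalKernel
  simp_all [Complex.exp_ne_zero]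

theorem rationalKernel_swap (m : ℕ) (μ : ℂ) (x : Fin k → ℂ) (z : Fin p → ℂ) :
    rationalKernel m μ x z = (-1) ^ (k * p * m) * rationalKernel m (-μ) z x := by
  have hcross : ∏ i, ∏ j, (x i - z j) = (-1) ^ (k * p) * ∏ j, ∏ i, (z j - x i) := by
    have h i j : x i - z j = -1 * (z j - x i) := by ring
    simp_rw [h, Finset.prod_mul_distrib, Finset.prod_const, Finset.card_univ, Fintype.card_fin,
      ← pow_mul]
    rw [Finset.prod_comm, mul_comm k p]
  unfold rationalKernel
  rw [hcross, mul_pow, ← pow_mul]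
  ring_nf

theorem logDeriv_rationalKernel_update (m : ℕ) (μ : ℂ) (x : Fin k → ℂ) {z : Fin p → ℂ}
    (hz : Injective z) (i : Fin k) {s : ℂ} (hs : Injective (update x i s))
    (hsz : ∀ a j, update x i s a ≠ z j) :
    logDeriv (fun t => rationalKernel m μ (update x i t) z) s
      = μ + m * ∑ j, (s - z j)⁻¹ - m * ∑ b ∈ {i}ᶜ, (s - x b)⁻¹ := by
  set N := fun t => ∏ a, ∏ j, (update x i t a - z j)
  set D := fun t => ∏ a, ∏ b ∈ Finset.Ioi a, (update x i t a - update x i t b)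
  set c := (∏ i, ∏ j ∈ Finset.Ioi i, (z i - z j)) ^ m
  set E := fun t => Complex.exp (μ * (∑ a, update x i t a - ∑ j, z j))
  have hN : N s ≠ 0 := Finset.prod_ne_zero_iff.2 fun a _ =>
    Finset.prod_ne_zero_iff.2 fun j _ => sub_ne_zero.2 (hsz a j)
  have hden : D s ^ m * c ≠ 0 :=
    mul_ne_zero (pow_ne_zero _ (prod_prod_Ioi_sub_ne_zero hs))
      (pow_ne_zero _ (prod_prod_Ioi_sub_ne_zero hz))
  have hE : HasDerivAt E (E s * (μ * 1)) s := by
    refine (((HasDerivAt.fun_sum fun a _ => hasDerivAt_update_apply x i a s).sub_const _).const_mul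
      μ).cexp.congr_deriv ?_
    simp [E, Finset.sum_pi_single']
  change logDeriv (fun t => N t ^ m / (D t ^ m * c) * E t) s = _
  rw [logDeriv_mul (f := fun t => N t ^ m / (D t ^ m * c)) (g := E) s
      (div_ne_zero (pow_ne_zero _ hN) hden) (Complex.exp_ne_zero _)
      (by fun_prop (disch := exact hden)) hE.differentiableAt,
    logDeriv_div (f := fun t => N t ^ m) (g := fun t => D t ^ m * c) s (pow_ne_zero _ hN) hden
      (by fun_prop) (by fun_prop),
    logDeriv_mul_const s c (right_ne_zero_of_mul hden), logDeriv_fun_pow (by fun_prop),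
    logDeriv_fun_pow (by fun_prop), logDeriv_prod_update_sub x z i hsz,
    logDeriv_prod_Ioi_update_sub x i hs, hE.logDeriv_eq,
    mul_div_cancel_left₀ _ (Complex.exp_ne_zero _)]
  ring

theorem deriv_deriv_rationalKernel_update (m : ℕ) (μ : ℂ) {x : Fin k → ℂ} (hx : Injective x)
    {z : Fin p → ℂ} (hz : Injective z) (hxz : ∀ i j, x i ≠ z j) (i : Fin k) :
    deriv (deriv fun s => rationalKernel m μ (update x i s) z) (x i)
      = kernelSecondDerivRatio m μ x z i * rationalKernel m μ x z := by
  set φ : ℂ → ℂ := fun s => μ + m * ∑ j, (s - z j)⁻¹ - m * ∑ b ∈ {i}ᶜ, (s - x b)⁻¹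
  have hf : deriv (fun s => rationalKernel m μ (update x i s) z)
      =ᶠ[𝓝 (x i)] fun s => φ s * rationalKernel m μ (update x i s) z :=
    ((eventually_injective_update hx i).and (eventually_update_apply_ne hxz i)).mono
      fun s ⟨hs, hsz⟩ => by
        have h := logDeriv_rationalKernel_update m μ x hz i hs hsz
        rwa [logDeriv_apply, div_eq_iff (rationalKernel_ne_zero m μ hs hz hsz)] at h
  have hinv {c : ℂ} (hc : x i ≠ c) : HasDerivAt (fun s => (s - c)⁻¹) (-((x i - c) ^ 2)⁻¹) (x i) :=
    ((hasDerivAt_inv (sub_ne_zero.2 hc)).comp (x i) ((hasDerivAt_id (x i)).sub_const c)).congr_deriv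
      (mul_one _)
  have hφ : HasDerivAt φ (m * ∑ j, -((x i - z j) ^ 2)⁻¹ - m * ∑ b ∈ {i}ᶜ, -((x i - x b) ^ 2)⁻¹)
      (x i) :=
    (((HasDerivAt.fun_sum fun j _ => hinv (hxz i j)).const_mul _).const_add μ).sub
      ((HasDerivAt.fun_sum fun b hb => hinv (hx.ne (by simpa [eq_comm] using hb))).const_mul _)
  have hdiff : DifferentiableAt ℂ (fun s => rationalKernel m μ (update x i s) z) (x i) := by
    unfold rationalKernel
    fun_prop (disch := simp [prod_prod_Ioi_sub_ne_zero hx, prod_prod_Ioi_sub_ne_zero hz])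
  have hsq : ∑ b ∈ {i}ᶜ, ((x i - x b) ^ 2)⁻¹ = ∑ b, ((x i - x b) ^ 2)⁻¹ := by
    rw [← Finset.sum_compl_add_sum {i}]
    simp
  have hinv' : ∑ b ∈ {i}ᶜ, (x i - x b)⁻¹ = ∑ b, (x i - x b)⁻¹ := by
    rw [← Finset.sum_compl_add_sum {i}]
    simp
  rw [deriv_deriv_eq_of_deriv_eventuallyEq hf hφ.differentiableAt hdiff, hφ.deriv, update_eq_self]
  simp only [φ, kernelSecondDerivRatio, Finset.sum_neg_distrib, hsq, hinv']
  ring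

end Kernel

theorem rational_kernel_identity_general (m : ℕ) (μ : ℂ) (k p : ℕ)
    (x : Fin k → ℂ) (z : Fin p → ℂ)
    (hx : ∀ i j, i ≠ j → x i ≠ x j) (hz : ∀ i j, i ≠ j → z i ≠ z j)
    (hxz : ∀ i j, x i ≠ z j)
    (K : (Fin k → ℂ) → (Fin p → ℂ) → ℂ)
    (hK : K = fun X Z =>
      (∏ i, ∏ j, (X i - Z j)) ^ m
        / ((∏ i, ∏ j ∈ Finset.Ioi i, (X i - X j)) ^ m
            * (∏ i, ∏ j ∈ Finset.Ioi i, (Z i - Z j)) ^ m)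
        * Complex.exp (μ * (∑ i, X i - ∑ i, Z i))) :
    -(∑ i, deriv (deriv (fun s => K (Function.update x i s) z)) (x i))
      + (∑ i, ∑ j ∈ Finset.Ioi i, 2 * (m : ℂ) * ((m : ℂ) + 1) / (x i - x j) ^ 2) * K x z
    = -(∑ i, deriv (deriv (fun s => K x (Function.update z i s))) (z i))
        + (∑ i, ∑ j ∈ Finset.Ioi i, 2 * (m : ℂ) * ((m : ℂ) + 1) / (z i - z j) ^ 2) * K x z
        + μ ^ 2 * ((p : ℂ) - (k : ℂ)) * K x z := by
  have hx' : Injective x := fun a b h => by_contra fun hab => hx a b hab h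
  have hz' : Injective z := fun a b h => by_contra fun hab => hz a b hab h
  obtain rfl : K = rationalKernel m μ := hK
  have hzside j : deriv (deriv fun s => rationalKernel m μ x (update z j s)) (z j)
      = kernelSecondDerivRatio m (-μ) z x j * rationalKernel m μ x z := by
    simp_rw [rationalKernel_swap m μ x, deriv_const_mul_field',
      deriv_deriv_rationalKernel_update m (-μ) hz' hx' fun j i => (hxz i j).symm]
    ring
  have hswap := sum_kernelSecondDerivRatio_sub_eq_swap hx' hz' hxz m μ
  rw [Fintype.card_fin, Fintype.card_fin] at hswap
  simp only [deriv_deriv_rationalKernel_update m μ hx' hz' hxz, hzside, ← Finset.sum_mul]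
  linear_combination rationalKernel m μ x z * (-hswap
    + two_mul_sum_sum_Ioi_div_sub_sq (2 * (m : ℂ) * ((m : ℂ) + 1)) x / 2
    - two_mul_sum_sum_Ioi_div_sub_sq (2 * (m : ℂ) * ((m : ℂ) + 1)) z / 2)

/-- The rational Stanley–Macdonald kernel identity: with
`K(x;z) = A(x,z)^m / (A(x)^m A(z)^m) · exp(μ(x̄ - z̄))` one has
`L_m^{(k)}(x) K = L_m^{(p)}(z) K + μ²(p - k) K`. -/
theorem rational_kernel_identity (m : ℕ) (hm : 0 < m) (μ : ℂ) (k p : ℕ)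
    (x : Fin k → ℂ) (z : Fin p → ℂ)
    (hx : ∀ i j, i ≠ j → x i ≠ x j) (hz : ∀ i j, i ≠ j → z i ≠ z j)
    (hxz : ∀ i j, x i ≠ z j)
    (K : (Fin k → ℂ) → (Fin p → ℂ) → ℂ)
    (hK : K = fun X Z =>
      (∏ i, ∏ j, (X i - Z j)) ^ m
        / ((∏ i, ∏ j ∈ Finset.Ioi i, (X i - X j)) ^ m
            * (∏ i, ∏ j ∈ Finset.Ioi i, (Z i - Z j)) ^ m)
        * Complex.exp (μ * (∑ i, X i - ∑ i, Z i))) :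
    -(∑ i, deriv (deriv (fun s => K (Function.update x i s) z)) (x i))
      + (∑ i, ∑ j ∈ Finset.Ioi i, 2 * (m : ℂ) * ((m : ℂ) + 1) / (x i - x j) ^ 2) * K x z
    = -(∑ i, deriv (deriv (fun s => K x (Function.update z i s))) (z i))
        + (∑ i, ∑ j ∈ Finset.Ioi i, 2 * (m : ℂ) * ((m : ℂ) + 1) / (z i - z j) ^ 2) * K x z
        + μ ^ 2 * ((p : ℂ) - (k : ℂ)) * K x z :=
  rational_kernel_identity_general m μ k p x z hx hz hxz K hK
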